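/- arXiv:2601.22404 — 4 statements merged into one kernel-verified Lean document; each statement's English description precedes it below -/
import Mathlib

section
/- Let κ : ℝ² → ℝ and u : ℝ² → ℝ both be continuously differentiable on an open neighborhood of X. Then ∫_X [ x₁·∂₁u(x) + (x₂+κ(x))·∂₂u(x) − (u(x) − u(x̲)) ]·f(x) dx = u(x̲) − ∫_{a₁}^{b₁} u(s,a₂)·(a₂+κ(s,a₂))·f(s,a₂) ds + ∫_{a₁}^{b₁} u(s,b₂)·(b₂+κ(s,b₂))·f(s,b₂) ds + ∫_{a₂}^{b₂} u(b₁,s)·b₁·f(b₁,s) ds − ∫_{a₂}^{b₂} u(a₁,s)·a₁·f(a₁,s) ds − ∫_X u(x)·[ x₁·∂₁f(x) + (x₂+κ(x))·∂₂f(x) + (3 + ∂₂κ(x))·f(x) ] dx. -/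
open MeasureTheory Set

noncomputable section

/-- The type rectangle `X = [a₁,b₁] × [a₂,b₂] ⊆ ℝ²`. -/
def rect (a₁ b₁ a₂ b₂ : ℝ) : Set (ℝ × ℝ) := Icc a₁ b₁ ×ˢ Icc a₂ b₂

/-- First partial derivative `∂₁f(x)`. -/
def d1 (f : ℝ × ℝ → ℝ) (x : ℝ × ℝ) : ℝ := deriv (fun s => f (s, x.2)) x.1

/-- Second partial derivative `∂₂f(x)`. -/
def d2 (f : ℝ × ℝ → ℝ) (x : ℝ × ℝ) : ℝ := deriv (fun s => f (x.1, s)) x.2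

/-- The interior density of the transformed measure `μ`:
`x₁·∂₁f(x) + (x₂+k)·∂₂f(x) + 3·f(x)`. -/
def dens (k : ℝ) (f : ℝ × ℝ → ℝ) (x : ℝ × ℝ) : ℝ :=
  x.1 * d1 f x + (x.2 + k) * d2 f x + 3 * f x

/-- The integral `∫ g dμ` of a function `g` against the transformed measure `μ` on
`X = [a₁,b₁] × [a₂,b₂]` with constant third-party payment `k`: a unit atom at the
lower-left corner `x̲ = (a₁,a₂)`, signed line densities on the four edges of `X`, and
(negated) interior density `dens k f` against two-dimensional Lebesgue measure. -/
def muInt (a₁ b₁ a₂ b₂ k : ℝ) (f g : ℝ × ℝ → ℝ) : ℝ :=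
  g (a₁, a₂)
    - (a₂ + k) * ∫ s in a₁..b₁, g (s, a₂) * f (s, a₂)
    + (b₂ + k) * ∫ s in a₁..b₁, g (s, b₂) * f (s, b₂)
    + b₁ * ∫ s in a₂..b₂, g (b₁, s) * f (b₁, s)
    - a₁ * ∫ s in a₂..b₂, g (a₁, s) * f (a₁, s)
    - ∫ x in rect a₁ b₁ a₂ b₂, g x * dens k f x

/-- `μ(A)` for a set `A ⊆ X`, obtained by integrating the indicator of `A` against `μ`. -/
def muSet (a₁ b₁ a₂ b₂ k : ℝ) (f : ℝ × ℝ → ℝ) (A : Set (ℝ × ℝ)) : ℝ :=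
  muInt a₁ b₁ a₂ b₂ k f (A.indicator 1)

/-- `u` is nondecreasing in the first coordinate on `X`. -/
def IncAlong1 (X : Set (ℝ × ℝ)) (u : ℝ × ℝ → ℝ) : Prop :=
  ∀ s s' t : ℝ, (s, t) ∈ X → (s', t) ∈ X → s ≤ s' → u (s, t) ≤ u (s', t)

/-- `u` is nondecreasing in the second coordinate on `X`. -/
def IncAlong2 (X : Set (ℝ × ℝ)) (u : ℝ × ℝ → ℝ) : Prop :=
  ∀ s t t' : ℝ, (s, t) ∈ X → (s, t') ∈ X → t ≤ t' → u (s, t) ≤ u (s, t')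

/-- `u` is nonincreasing in the first coordinate on `X`. -/
def DecAlong1 (X : Set (ℝ × ℝ)) (u : ℝ × ℝ → ℝ) : Prop :=
  ∀ s s' t : ℝ, (s, t) ∈ X → (s', t) ∈ X → s ≤ s' → u (s', t) ≤ u (s, t)

/-- `u` is nonincreasing in the second coordinate on `X`. -/
def DecAlong2 (X : Set (ℝ × ℝ)) (u : ℝ × ℝ → ℝ) : Prop :=
  ∀ s t t' : ℝ, (s, t) ∈ X → (s, t') ∈ X → t ≤ t' → u (s, t') ≤ u (s, t)

/-- The feasible class `𝒰`: continuous, convex, nondecreasing in each coordinate,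
and 1-Lipschitz with respect to the `ℓ¹` norm, on `X`. -/
def FeasibleU (X : Set (ℝ × ℝ)) (u : ℝ × ℝ → ℝ) : Prop :=
  ContinuousOn u X ∧ ConvexOn ℝ X u ∧ IncAlong1 X u ∧ IncAlong2 X u ∧
    ∀ x ∈ X, ∀ y ∈ X, |u x - u y| ≤ |x.1 - y.1| + |x.2 - y.2|

end


/-! The identity is the divergence theorem on `X` for the vector field `u f · (x₁, x₂ + κ)`:
its divergence `∂₁(u x₁ f) + ∂₂(u (x₂ + κ) f)` splits by the product rule into the transport
term `(x₁ ∂₁u + (x₂ + κ) ∂₂u) f` plus `u (x₁ ∂₁f + (x₂ + κ) ∂₂f + (2 + ∂₂κ) f)`, and the remaining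
`(u(x̲) - u) f` integrates to `u(x̲) - ∫_X u f` because `∫_X f = 1`. -/

section PartialDerivatives

variable {g h : ℝ × ℝ → ℝ} {x : ℝ × ℝ}

lemma hasDerivAt_d1 (hg : DifferentiableAt ℝ g x) :
    HasDerivAt (fun s => g (s, x.2)) (fderiv ℝ g x (1, 0)) x.1 :=
  (hg.hasFDerivAt : HasFDerivAt g _ (x.1, x.2)).comp_hasDerivAt x.1
    ((hasDerivAt_id x.1).prodMk (hasDerivAt_const x.1 x.2))

lemma hasDerivAt_d2 (hg : DifferentiableAt ℝ g x) :
    HasDerivAt (fun s => g (x.1, s)) (fderiv ℝ g x (0, 1)) x.2 :=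
  (hg.hasFDerivAt : HasFDerivAt g _ (x.1, x.2)).comp_hasDerivAt x.2
    ((hasDerivAt_const x.2 x.1).prodMk (hasDerivAt_id x.2))

lemma d1_eq_fderiv (hg : DifferentiableAt ℝ g x) : d1 g x = fderiv ℝ g x (1, 0) :=
  (hasDerivAt_d1 hg).deriv

lemma d2_eq_fderiv (hg : DifferentiableAt ℝ g x) : d2 g x = fderiv ℝ g x (0, 1) :=
  (hasDerivAt_d2 hg).deriv

lemma d1_mul (hg : DifferentiableAt ℝ g x) (hh : DifferentiableAt ℝ h x) :
    d1 (fun y => g y * h y) x = d1 g x * h x + g x * d1 h x :=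
  deriv_mul (hasDerivAt_d1 hg).differentiableAt (hasDerivAt_d1 hh).differentiableAt

lemma d2_mul (hg : DifferentiableAt ℝ g x) (hh : DifferentiableAt ℝ h x) :
    d2 (fun y => g y * h y) x = d2 g x * h x + g x * d2 h x :=
  deriv_mul (hasDerivAt_d2 hg).differentiableAt (hasDerivAt_d2 hh).differentiableAt

lemma d1_fst : d1 Prod.fst x = 1 := by
  simp [d1]

lemma d2_snd_add (hg : DifferentiableAt ℝ g x) : d2 (fun y => y.2 + g y) x = 1 + d2 g x := by
  rw [d2_eq_fderiv hg]
  exact ((hasDerivAt_id' x.2).add (hasDerivAt_d2 hg)).deriv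

variable {U : Set (ℝ × ℝ)}

lemma ContDiffOn.continuousOn_d1 (hg : ContDiffOn ℝ 1 g U) (hU : IsOpen U) :
    ContinuousOn (d1 g) U :=
  ((hg.continuousOn_fderiv_of_isOpen hU le_rfl).clm_apply continuousOn_const).congr fun _ hx =>
    d1_eq_fderiv (hg.differentiableOn_one.differentiableAt (hU.mem_nhds hx))

lemma ContDiffOn.continuousOn_d2 (hg : ContDiffOn ℝ 1 g U) (hU : IsOpen U) :
    ContinuousOn (d2 g) U :=
  ((hg.continuousOn_fderiv_of_isOpen hU le_rfl).clm_apply continuousOn_const).congr fun _ hx =>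
    d2_eq_fderiv (hg.differentiableOn_one.differentiableAt (hU.mem_nhds hx))

end PartialDerivatives

section Rectangle

variable {a₁ b₁ a₂ b₂ : ℝ} {U : Set (ℝ × ℝ)}

lemma rect_eq_Icc : rect a₁ b₁ a₂ b₂ = Icc (a₁, a₂) (b₁, b₂) :=
  Icc_prod_Icc _ _ _ _

lemma measurableSet_rect : MeasurableSet (rect a₁ b₁ a₂ b₂) :=
  measurableSet_Icc.prod measurableSet_Icc

lemma integrableOn_rect {g : ℝ × ℝ → ℝ} (hXU : rect a₁ b₁ a₂ b₂ ⊆ U) (hg : ContinuousOn g U) :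
    IntegrableOn g (rect a₁ b₁ a₂ b₂) :=
  (hg.mono hXU).integrableOn_compact (isCompact_Icc.prod isCompact_Icc)

theorem integral_rect_d1_add_d2 (h₁ : a₁ ≤ b₁) (h₂ : a₂ ≤ b₂) (hU : IsOpen U)
    (hXU : rect a₁ b₁ a₂ b₂ ⊆ U) {P Q : ℝ × ℝ → ℝ}
    (hP : ContDiffOn ℝ 1 P U) (hQ : ContDiffOn ℝ 1 Q U) :
    ∫ x in rect a₁ b₁ a₂ b₂, (d1 P x + d2 Q x)
      = (∫ s in a₁..b₁, Q (s, b₂)) - (∫ s in a₁..b₁, Q (s, a₂))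
        + (∫ s in a₂..b₂, P (b₁, s)) - ∫ s in a₂..b₂, P (a₁, s) := by
  have hdiff {R : ℝ × ℝ → ℝ} (hR : ContDiffOn ℝ 1 R U) {x} (hx : x ∈ rect a₁ b₁ a₂ b₂) :
      DifferentiableAt ℝ R x :=
    hR.differentiableOn_one.differentiableAt (hU.mem_nhds (hXU hx))
  have hIoo : Ioo a₁ b₁ ×ˢ Ioo a₂ b₂ ⊆ rect a₁ b₁ a₂ b₂ :=
    prod_mono Ioo_subset_Icc_self Ioo_subset_Icc_self
  have hcongr : EqOn (fun x => d1 P x + d2 Q x)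
      (fun x => fderiv ℝ P x (1, 0) + fderiv ℝ Q x (0, 1)) (rect a₁ b₁ a₂ b₂) := fun x hx => by
    simp only [d1_eq_fderiv (hdiff hP hx), d2_eq_fderiv (hdiff hQ hx)]
  have hint : IntegrableOn (fun x => d1 P x + d2 Q x) (rect a₁ b₁ a₂ b₂) :=
    integrableOn_rect hXU ((hP.continuousOn_d1 hU).add (hQ.continuousOn_d2 hU))
  rw [setIntegral_congr_fun measurableSet_rect hcongr]
  rw [rect_eq_Icc] at hint hcongr hXU ⊢
  exact integral_divergence_prod_Icc_of_hasFDerivAt_of_le P Q _ _ (a₁, a₂) (b₁, b₂) ⟨h₁, h₂⟩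
    (hP.continuousOn.mono hXU) (hQ.continuousOn.mono hXU)
    (fun x hx => (hdiff hP (hIoo hx)).hasFDerivAt) (fun x hx => (hdiff hQ (hIoo hx)).hasFDerivAt)
    (hint.congr_fun hcongr measurableSet_Icc)

end Rectangle

lemma transport_mul_eq_d1_add_d2 {u f κ : ℝ × ℝ → ℝ} {x : ℝ × ℝ} (hu : DifferentiableAt ℝ u x)
    (hf : DifferentiableAt ℝ f x) (hκ : DifferentiableAt ℝ κ x) (c : ℝ) :
    (x.1 * d1 u x + (x.2 + κ x) * d2 u x - (u x - c)) * f x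
      = d1 (fun y => u y * y.1 * f y) x + d2 (fun y => u y * (y.2 + κ y) * f y) x + c * f x
        - u x * (x.1 * d1 f x + (x.2 + κ x) * d2 f x + (3 + d2 κ x) * f x) := by
  have hκ₂ := differentiableAt_snd.fun_add hκ
  rw [d1_mul (hu.fun_mul differentiableAt_fst) hf, d1_mul hu differentiableAt_fst, d1_fst,
    d2_mul (hu.fun_mul hκ₂) hf, d2_mul hu hκ₂, d2_snd_add hκ]
  ring

theorem stmt0_general
    (a₁ b₁ a₂ b₂ : ℝ) (hab₁ : a₁ < b₁) (hab₂ : a₂ < b₂)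
    (U : Set (ℝ × ℝ)) (hU : IsOpen U) (hXU : rect a₁ b₁ a₂ b₂ ⊆ U)
    (f : ℝ × ℝ → ℝ) (hf : ContDiffOn ℝ 1 f U)
    (hfint : (∫ x in rect a₁ b₁ a₂ b₂, f x) = 1)
    (κ : ℝ × ℝ → ℝ) (hκ : ContDiffOn ℝ 1 κ U)
    (u : ℝ × ℝ → ℝ) (hu : ContDiffOn ℝ 1 u U) :
    (∫ x in rect a₁ b₁ a₂ b₂,
        (x.1 * d1 u x + (x.2 + κ x) * d2 u x - (u x - u (a₁, a₂))) * f x)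
      = u (a₁, a₂)
        - (∫ s in a₁..b₁, u (s, a₂) * (a₂ + κ (s, a₂)) * f (s, a₂))
        + (∫ s in a₁..b₁, u (s, b₂) * (b₂ + κ (s, b₂)) * f (s, b₂))
        + (∫ s in a₂..b₂, u (b₁, s) * b₁ * f (b₁, s))
        - (∫ s in a₂..b₂, u (a₁, s) * a₁ * f (a₁, s))
        - ∫ x in rect a₁ b₁ a₂ b₂,
            u x * (x.1 * d1 f x + (x.2 + κ x) * d2 f x + (3 + d2 κ x) * f x) := by
  have hdiff {g : ℝ × ℝ → ℝ} (hg : ContDiffOn ℝ 1 g U) {x} (hx : x ∈ rect a₁ b₁ a₂ b₂) :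
      DifferentiableAt ℝ g x :=
    hg.differentiableOn_one.differentiableAt (hU.mem_nhds (hXU hx))
  have hP : ContDiffOn ℝ 1 (fun y => u y * y.1 * f y) U := (hu.mul contDiffOn_fst).mul hf
  have hQ : ContDiffOn ℝ 1 (fun y => u y * (y.2 + κ y) * f y) U :=
    (hu.mul (contDiffOn_snd.add hκ)).mul hf
  have hdiv := integral_rect_d1_add_d2 hab₁.le hab₂.le hU hXU hP hQ
  -- for `fun_prop` in the integrability side goals
  have hcu := hu.continuousOn
  have hcf := hf.continuousOn
  have hcκ := hκ.continuousOn
  have hcf₁ := hf.continuousOn_d1 hU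
  have hcf₂ := hf.continuousOn_d2 hU
  have hcκ₂ := hκ.continuousOn_d2 hU
  have hcP₁ := hP.continuousOn_d1 hU
  have hcQ₂ := hQ.continuousOn_d2 hU
  rw [setIntegral_congr_fun measurableSet_rect
      fun x hx => transport_mul_eq_d1_add_d2 (hdiff hu hx) (hdiff hf hx) (hdiff hκ hx) (u (a₁, a₂)),
    integral_sub, integral_add, integral_const_mul, hfint, hdiv]
  · ring
  all_goals exact integrableOn_rect hXU (by fun_prop)

/-- Integration-by-parts identity (Appendix A.1) for a general third-party payment
function `κ`. -/
theorem stmt0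
    (a₁ b₁ a₂ b₂ : ℝ) (ha₁ : 0 ≤ a₁) (hab₁ : a₁ < b₁) (hab₂ : a₂ < b₂) (hb₂ : b₂ ≤ 0)
    (U : Set (ℝ × ℝ)) (hU : IsOpen U) (hXU : rect a₁ b₁ a₂ b₂ ⊆ U)
    (f : ℝ × ℝ → ℝ) (hf : ContDiffOn ℝ 1 f U)
    (hfbd : ∃ C, ∀ x ∈ U, |d1 f x| ≤ C ∧ |d2 f x| ≤ C)
    (hfpos : ∀ x ∈ rect a₁ b₁ a₂ b₂, 0 < f x)
    (hfint : (∫ x in rect a₁ b₁ a₂ b₂, f x) = 1)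
    (κ : ℝ × ℝ → ℝ) (hκ : ContDiffOn ℝ 1 κ U)
    (u : ℝ × ℝ → ℝ) (hu : ContDiffOn ℝ 1 u U) :
    (∫ x in rect a₁ b₁ a₂ b₂,
        (x.1 * d1 u x + (x.2 + κ x) * d2 u x - (u x - u (a₁, a₂))) * f x)
      = u (a₁, a₂)
        - (∫ s in a₁..b₁, u (s, a₂) * (a₂ + κ (s, a₂)) * f (s, a₂))
        + (∫ s in a₁..b₁, u (s, b₂) * (b₂ + κ (s, b₂)) * f (s, b₂))
        + (∫ s in a₂..b₂, u (b₁, s) * b₁ * f (b₁, s))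
        - (∫ s in a₂..b₂, u (a₁, s) * a₁ * f (a₁, s))
        - ∫ x in rect a₁ b₁ a₂ b₂,
            u x * (x.1 * d1 f x + (x.2 + κ x) * d2 f x + (3 + d2 κ x) * f x) :=
  stmt0_general a₁ b₁ a₂ b₂ hab₁ hab₂ U hU hXU f hf hfint κ hκ u hu
end

section
/- Let ν be a finite signed Borel measure on X. Let J be a finite nonempty index set, and for each j ∈ J let a_j ∈ [0,1]² and p_j ∈ ℝ; define u*(x) = max_{j∈J} (a_j·x − p_j), and let {R_j}_{j∈J} be a Borel partition of X such that u*(x) = a_j·x − p_j for every x ∈ R_j. Suppose that for every j ∈ J and every continuous convex function h : X → ℝ that is nondecreasing in the i-th coordinate whenever the i-th component of a_j equals 0 and nonincreasing in the i-th coordinate whenever the i-th component of a_j equals 1, one has ∫_{R_j} h dν ≤ 0. Then ∫_X u dν ≤ ∫_X u* dν for every u ∈ 𝒰. -/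
open MeasureTheory Set

lemma aff_concaveOn (s : Set (ℝ × ℝ)) (hs : Convex ℝ s) (c1 c2 c3 : ℝ) :
    ConcaveOn ℝ s (fun x : ℝ × ℝ => c1 * x.1 + c2 * x.2 - c3) := by
  refine ⟨hs, ?_⟩
  intro x _ y _ t r ht hr htr
  simp only [smul_eq_mul, Prod.smul_fst, Prod.smul_snd, Prod.fst_add, Prod.snd_add]
  apply le_of_eq
  linear_combination (-c3 : ℝ) * htr

/-- DDT sufficiency direction of the finite-menu characterization (Lemma 1 of the paper).
The finite signed Borel measure `ν` on `X` is encoded as the difference `ν₁ − ν₂` of two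
finite Borel measures supported on `X`. -/
theorem stmt3
    (a₁ b₁ a₂ b₂ : ℝ) (hab₁ : a₁ < b₁) (hab₂ : a₂ < b₂)
    (ν₁ ν₂ : Measure (ℝ × ℝ)) [IsFiniteMeasure ν₁] [IsFiniteMeasure ν₂]
    (hsupp₁ : ν₁ (rect a₁ b₁ a₂ b₂)ᶜ = 0) (hsupp₂ : ν₂ (rect a₁ b₁ a₂ b₂)ᶜ = 0)
    (ι : Type) [Fintype ι] [Nonempty ι]
    (a : ι → ℝ × ℝ) (ha : ∀ j, (a j).1 ∈ Icc (0 : ℝ) 1 ∧ (a j).2 ∈ Icc (0 : ℝ) 1)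
    (p : ι → ℝ)
    (R : ι → Set (ℝ × ℝ)) (hRmeas : ∀ j, MeasurableSet (R j))
    (hRdisj : ∀ i j, i ≠ j → Disjoint (R i) (R j))
    (hRcover : (⋃ j, R j) = rect a₁ b₁ a₂ b₂)
    (hRaff : ∀ j, ∀ x ∈ R j,
      (⨆ i, ((a i).1 * x.1 + (a i).2 * x.2 - p i))
        = (a j).1 * x.1 + (a j).2 * x.2 - p j)
    (hdom : ∀ j, ∀ h : ℝ × ℝ → ℝ,
      ContinuousOn h (rect a₁ b₁ a₂ b₂) →
      ConvexOn ℝ (rect a₁ b₁ a₂ b₂) h →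
      ((a j).1 = 0 → IncAlong1 (rect a₁ b₁ a₂ b₂) h) →
      ((a j).1 = 1 → DecAlong1 (rect a₁ b₁ a₂ b₂) h) →
      ((a j).2 = 0 → IncAlong2 (rect a₁ b₁ a₂ b₂) h) →
      ((a j).2 = 1 → DecAlong2 (rect a₁ b₁ a₂ b₂) h) →
      (∫ x in R j, h x ∂ν₁) - (∫ x in R j, h x ∂ν₂) ≤ 0)
    (u : ℝ × ℝ → ℝ) (hu : FeasibleU (rect a₁ b₁ a₂ b₂) u) :
    (∫ x in rect a₁ b₁ a₂ b₂, u x ∂ν₁) - (∫ x in rect a₁ b₁ a₂ b₂, u x ∂ν₂)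
      ≤ (∫ x in rect a₁ b₁ a₂ b₂, (⨆ i, ((a i).1 * x.1 + (a i).2 * x.2 - p i)) ∂ν₁)
        - ∫ x in rect a₁ b₁ a₂ b₂, (⨆ i, ((a i).1 * x.1 + (a i).2 * x.2 - p i)) ∂ν₂ := by
  classical
  obtain ⟨hcont, hconv, hinc1, hinc2, hlip⟩ := hu
  set X := rect a₁ b₁ a₂ b₂ with hX
  have hXconv : Convex ℝ X := (convex_Icc a₁ b₁).prod (convex_Icc a₂ b₂)
  have hXcomp : IsCompact X := isCompact_Icc.prod isCompact_Icc
  set ustar : ℝ × ℝ → ℝ := fun x => ⨆ i, ((a i).1 * x.1 + (a i).2 * x.2 - p i) with hustar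
  set aff : ι → ℝ × ℝ → ℝ := fun j x => (a j).1 * x.1 + (a j).2 * x.2 - p j with haff
  have hcontaff : ∀ j, Continuous (aff j) := by
    intro j; fun_prop
  have huint : ∀ (ν : Measure (ℝ × ℝ)) [IsFiniteMeasure ν], IntegrableOn u X ν := by
    intro ν _; exact hcont.integrableOn_compact hXcomp
  have haffint : ∀ j, ∀ (ν : Measure (ℝ × ℝ)) [IsFiniteMeasure ν],
      IntegrableOn (aff j) X ν := by
    intro j ν _; exact ((hcontaff j).continuousOn).integrableOn_compact hXcomp
  have hRsub : ∀ j, R j ⊆ X := by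
    intro j; rw [← hRcover]; exact subset_iUnion R j
  -- per-region inequality
  have key : ∀ j,
      (∫ x in R j, u x ∂ν₁) - (∫ x in R j, u x ∂ν₂)
        ≤ (∫ x in R j, ustar x ∂ν₁) - (∫ x in R j, ustar x ∂ν₂) := by
    intro j
    set h : ℝ × ℝ → ℝ := fun x => u x - aff j x with hh
    have hhc : ContinuousOn h X := hcont.sub ((hcontaff j).continuousOn)
    have hhconv : ConvexOn ℝ X h := hconv.sub (aff_concaveOn X hXconv _ _ _)
    have h00 : (a j).1 = 0 → IncAlong1 X h := by
      intro h0 s s' t hst hs't hss'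
      simp only [hh, haff, h0, zero_mul]
      have := hinc1 s s' t hst hs't hss'
      linarith
    have h01 : (a j).1 = 1 → DecAlong1 X h := by
      intro h1 s s' t hst hs't hss'
      simp only [hh, haff, h1, one_mul]
      have := hlip (s', t) hs't (s, t) hst
      simp only [sub_self, abs_zero, add_zero] at this
      have h2 : u (s', t) - u (s, t) ≤ |s' - s| :=
        le_trans (le_abs_self (u (s', t) - u (s, t))) this
      rw [abs_of_nonneg (by linarith : (0:ℝ) ≤ s' - s)] at h2
      linarith
    have h10 : (a j).2 = 0 → IncAlong2 X h := by
      intro h0 s t t' hst hst' htt'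
      simp only [hh, haff, h0, zero_mul]
      have := hinc2 s t t' hst hst' htt'
      linarith
    have h11 : (a j).2 = 1 → DecAlong2 X h := by
      intro h1 s t t' hst hst' htt'
      simp only [hh, haff, h1, one_mul]
      have := hlip (s, t') hst' (s, t) hst
      simp only [sub_self, abs_zero, zero_add] at this
      have h2 : u (s, t') - u (s, t) ≤ |t' - t| :=
        le_trans (le_abs_self (u (s, t') - u (s, t))) this
      rw [abs_of_nonneg (by linarith : (0:ℝ) ≤ t' - t)] at h2
      linarith
    have hint_u₁ : IntegrableOn u (R j) ν₁ := (huint ν₁).mono_set (hRsub j)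
    have hint_u₂ : IntegrableOn u (R j) ν₂ := (huint ν₂).mono_set (hRsub j)
    have hint_a₁ : IntegrableOn (aff j) (R j) ν₁ := (haffint j ν₁).mono_set (hRsub j)
    have hint_a₂ : IntegrableOn (aff j) (R j) ν₂ := (haffint j ν₂).mono_set (hRsub j)
    have hsplit₁ : ∫ x in R j, h x ∂ν₁
        = (∫ x in R j, u x ∂ν₁) - ∫ x in R j, aff j x ∂ν₁ :=
      integral_sub hint_u₁ hint_a₁
    have hsplit₂ : ∫ x in R j, h x ∂ν₂
        = (∫ x in R j, u x ∂ν₂) - ∫ x in R j, aff j x ∂ν₂ :=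
      integral_sub hint_u₂ hint_a₂
    have heq : ∀ (ν : Measure (ℝ × ℝ)),
        ∫ x in R j, aff j x ∂ν = ∫ x in R j, ustar x ∂ν := by
      intro ν
      refine setIntegral_congr_fun (hRmeas j) ?_
      intro x hx
      exact (hRaff j x hx).symm
    have hd := hdom j h hhc hhconv h00 h01 h10 h11
    rw [hsplit₁, hsplit₂] at hd
    rw [← heq ν₁, ← heq ν₂]
    linarith
  -- integrability of ustar on each region
  have hustar_int : ∀ j, ∀ (ν : Measure (ℝ × ℝ)) [IsFiniteMeasure ν],
      IntegrableOn ustar (R j) ν := by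
    intro j ν _
    refine ((haffint j ν).mono_set (hRsub j)).congr_fun ?_ (hRmeas j)
    intro x hx
    exact (hRaff j x hx).symm
  -- decompose integrals over the partition
  have hdecomp : ∀ (f : ℝ × ℝ → ℝ) (ν : Measure (ℝ × ℝ)) [IsFiniteMeasure ν],
      (∀ j, IntegrableOn f (R j) ν) →
      ∫ x in X, f x ∂ν = ∑ j, ∫ x in R j, f x ∂ν := by
    intro f ν _ hint
    rw [← hRcover, ← Set.biUnion_univ, ← Finset.coe_univ, Finset.set_biUnion_coe]
    exact integral_biUnion_finset Finset.univ (fun i _ => hRmeas i)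
      (fun i _ j _ hij => hRdisj i j hij) (fun i _ => hint i)
  rw [show (∫ x in X, u x ∂ν₁) = ∑ j, ∫ x in R j, u x ∂ν₁ from
        hdecomp u ν₁ (fun j => (huint ν₁).mono_set (hRsub j)),
      show (∫ x in X, u x ∂ν₂) = ∑ j, ∫ x in R j, u x ∂ν₂ from
        hdecomp u ν₂ (fun j => (huint ν₂).mono_set (hRsub j)),
      show (∫ x in X, ustar x ∂ν₁) = ∑ j, ∫ x in R j, ustar x ∂ν₁ from
        hdecomp ustar ν₁ (fun j => hustar_int j ν₁),
      show (∫ x in X, ustar x ∂ν₂) = ∑ j, ∫ x in R j, ustar x ∂ν₂ from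
        hdecomp ustar ν₂ (fun j => hustar_int j ν₂)]
  rw [← Finset.sum_sub_distrib, ← Finset.sum_sub_distrib]
  exact Finset.sum_le_sum fun j _ => key j
end

section
/- Let (Ω, Σ) be a measurable space, let ν be a finite signed measure on (Ω, Σ) with ν(Ω) = 0, and let u : Ω → ℝ be a bounded measurable function such that ν({x ∈ Ω : u(x) ≤ α}) ≥ 0 for every α ∈ ℝ. Then ∫_Ω u dν ≤ 0. -/
/-!
Shifting `u` by its bound makes it nonnegative, and by the layer-cake formula
`∫ v dμ = ∫_{t > 0} μ {t < v} dt` it suffices to compare the superlevel sets. Since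
`ν₁` and `ν₂` have the same total mass, the hypothesis on the sublevel sets turns into
`ν₁ {t < v} ≤ ν₂ {t < v}` by taking complements.
-/

open MeasureTheory Set

theorem measure_compl_le_of_le_of_measure_univ_eq {α : Type*} [MeasurableSpace α]
    {μ ν : Measure α} [IsFiniteMeasure ν] (huniv : μ univ = ν univ) {s : Set α}
    (hs : MeasurableSet s) (hle : ν s ≤ μ s) : μ sᶜ ≤ ν sᶜ := by
  have hμs : μ s ≠ ⊤ :=
    ((measure_mono (subset_univ s)).trans_lt (huniv ▸ measure_lt_top ν univ)).ne
  rw [measure_compl hs hμs, measure_compl hs (measure_ne_top ν s), huniv]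
  exact tsub_le_tsub_left hle _

theorem integral_le_integral_of_measure_lt_le {α : Type*} [MeasurableSpace α]
    {μ ν : Measure α} {f : α → ℝ} (hf : Measurable f) (hf_nonneg : ∀ x, 0 ≤ f x)
    (hfν : Integrable f ν) (hle : ∀ t, μ {x | t < f x} ≤ ν {x | t < f x}) :
    ∫ x, f x ∂μ ≤ ∫ x, f x ∂ν := by
  rw [integral_eq_lintegral_of_nonneg_ae (.of_forall hf_nonneg) hf.aestronglyMeasurable,
    integral_eq_lintegral_of_nonneg_ae (.of_forall hf_nonneg) hf.aestronglyMeasurable]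
  refine ENNReal.toReal_mono (hfν.lintegral_lt_top).ne ?_
  rw [lintegral_eq_lintegral_meas_lt μ (.of_forall hf_nonneg) hf.aemeasurable,
    lintegral_eq_lintegral_meas_lt ν (.of_forall hf_nonneg) hf.aemeasurable]
  exact lintegral_mono fun t => hle t

/-- The layer-cake lemma of Appendix A.2.2 (adaptation of Theorem 3.3.4 of
Müller–Stoyan). The finite signed measure `ν` on `(Ω, Σ)` is encoded as the
difference `ν₁ − ν₂` of two finite measures. -/
theorem stmt7 {Ω : Type*} [MeasurableSpace Ω]
    (ν₁ ν₂ : Measure Ω) [IsFiniteMeasure ν₁] [IsFiniteMeasure ν₂]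
    (hzero : (ν₁ univ).toReal = (ν₂ univ).toReal)
    (u : Ω → ℝ) (hmeas : Measurable u) (hbd : ∃ C, ∀ x, |u x| ≤ C)
    (hsub : ∀ α : ℝ, (ν₂ {x | u x ≤ α}).toReal ≤ (ν₁ {x | u x ≤ α}).toReal) :
    (∫ x, u x ∂ν₁) - (∫ x, u x ∂ν₂) ≤ 0 := by
  obtain ⟨C, hC⟩ := hbd
  have hint : ∀ (μ : Measure Ω) [IsFiniteMeasure μ], Integrable u μ := fun μ _ =>
    .of_bound hmeas.aestronglyMeasurable C (.of_forall hC)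
  have huniv : ν₁ univ = ν₂ univ :=
    (ENNReal.toReal_eq_toReal_iff' (measure_ne_top _ _) (measure_ne_top _ _)).mp hzero
  have hsuper : ∀ t, ν₁ {x | t < u x + C} ≤ ν₂ {x | t < u x + C} := by
    intro t
    have hsub' := (ENNReal.toReal_le_toReal (measure_ne_top _ _) (measure_ne_top _ _)).mp
      (hsub (t - C))
    have hcompl : {x | t < u x + C} = {x | u x ≤ t - C}ᶜ := by
      ext x; simp only [mem_ofPred_eq, mem_compl_iff, not_le, sub_lt_iff_lt_add]
    rw [hcompl]
    exact measure_compl_le_of_le_of_measure_univ_eq huniv (hmeas measurableSet_Iic) hsub'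
  have hshift := integral_le_integral_of_measure_lt_le (hmeas.add_const C)
    (fun x => by linarith [neg_abs_le (u x), hC x]) ((hint ν₂).add (integrable_const C)) hsuper
  rw [integral_add (hint ν₁) (integrable_const C), integral_add (hint ν₂) (integrable_const C),
    integral_const, integral_const, measureReal_def, measureReal_def, hzero] at hshift
  linarith
end

section
/- Let n ≥ 1, let X ⊆ ℝⁿ be a convex set, and let q : X → ℝⁿ and t : X → ℝ. Then the direct mechanism (q,t) is incentive compatible, i.e., x·q(x) − t(x) ≥ x·q(x') − t(x') for all x, x' ∈ X, if and only if the function u : X → ℝ defined by u(x) = x·q(x) − t(x) is convex on X and, for every x ∈ X, q(x) is a subgradient of u at x, i.e., u(y) ≥ u(x) + q(x)·(y − x) for all y ∈ X. -/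
open Finset

lemma sum_sub_aux (n : ℕ) (x y g : Fin n → ℝ) :
    (∑ i, g i * (y i - x i)) = (∑ i, y i * g i) - (∑ i, x i * g i) := by
  rw [← Finset.sum_sub_distrib]
  exact Finset.sum_congr rfl fun i _ => by ring

/-- Rochet's (1987) characterization of incentive compatibility: a direct mechanism
`(q, t)` on a convex type space `X ⊆ ℝⁿ` is incentive compatible if and only if the
indirect utility `u(x) = x·q(x) − t(x)` is convex on `X` and `q(x)` is a subgradient
of `u` at every `x ∈ x`. -/
theorem stmt18 (n : ℕ) (hn : 1 ≤ n) (X : Set (Fin n → ℝ)) (hX : Convex ℝ X)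
    (q : (Fin n → ℝ) → (Fin n → ℝ)) (t : (Fin n → ℝ) → ℝ) :
    (∀ x ∈ X, ∀ x' ∈ X,
        (∑ i, x i * q x' i) - t x' ≤ (∑ i, x i * q x i) - t x)
      ↔ (ConvexOn ℝ X (fun x => (∑ i, x i * q x i) - t x) ∧
          ∀ x ∈ X, ∀ y ∈ X,
            ((∑ i, x i * q x i) - t x) + (∑ i, q x i * (y i - x i))
              ≤ (∑ i, y i * q y i) - t y) := by
  constructor
  · intro h
    constructor
    · refine ⟨hX, ?_⟩
      intro x hx y hy a b ha hb hab
      have hz : a • x + b • y ∈ X := hX hx hy ha hb hab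
      have h1 := h x hx _ hz
      have h2 := h y hy _ hz
      have hzq : (∑ i, (a • x + b • y) i * q (a • x + b • y) i)
          = a * (∑ i, x i * q (a • x + b • y) i)
            + b * (∑ i, y i * q (a • x + b • y) i) := by
        rw [Finset.mul_sum, Finset.mul_sum, ← Finset.sum_add_distrib]
        refine Finset.sum_congr rfl fun i _ => ?_
        simp [Pi.add_apply, Pi.smul_apply, smul_eq_mul]
        ring
      have ht : t (a • x + b • y) = a * t (a • x + b • y) + b * t (a • x + b • y) := by
        rw [← add_mul, hab, one_mul]
      simp only [smul_eq_mul]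
      nlinarith [mul_le_mul_of_nonneg_left h1 ha, mul_le_mul_of_nonneg_left h2 hb]
    · intro x hx y hy
      have := h y hy x hx
      rw [sum_sub_aux n x y (q x)]
      linarith
  · rintro ⟨-, hs⟩ x hx x' hx'
    have := hs x' hx' x hx
    rw [sum_sub_aux n x' x (q x')] at this
    linarith
end
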